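/- If a set of atoms C satisfies a set Σ of dependencies, contains a database D, and admits a homomorphism into every database B with B ⊇ D and B ⊨ Σ that is the identity on the constants of D, then for every conjunctive query q, the set of answers to q over C consisting only of non-fresh constants equals the set of certain answers to q with respect to D and Σ. -/

import Mathlib

/-- Constants: `Sum.inl` = non-fresh constants (dom), `Sum.inr` = fresh constants (Γ_f). -/
abbrev Const := ℕ ⊕ ℕ

def nonFresh (c : Const) : Prop := ∃ n, c = Sum.inl n
def isFresh (c : Const) : Prop := ∃ n, c = Sum.inr n

/-- An atom over an argument type `α` (for facts, `α = Const`; for query bodies, terms). -/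
structure GAtom (α : Type) where
  rel : String
  args : List α
deriving DecidableEq

abbrev Atom := GAtom Const
/-- A (possibly infinite) database instance is a set of facts. -/
abbrev DB := Set Atom

def mapAtom (f : Const → Const) (a : Atom) : Atom := ⟨a.rel, a.args.map f⟩

/-- `μ` is a homomorphism from the set of atoms `D1` to `D2` (as a map on constants). -/
def isHom (μ : Const → Const) (D1 D2 : DB) : Prop := ∀ a ∈ D1, mapAtom μ a ∈ D2

/-- `μ` fixes all non-fresh constants. -/
def homFix (μ : Const → Const) : Prop := ∀ n : ℕ, μ (Sum.inl n) = Sum.inl n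

/-- `c` occurs as an argument of some fact of `D`. -/
def occursC (c : Const) (D : DB) : Prop := ∃ a ∈ D, c ∈ a.args

/-- A conjunctive query with terms from `T`: head `q(headArgs)` and a body of atoms. -/
structure Query (T : Type) where
  headArgs : List T
  body : Set (GAtom T)

/-- Answers of `q` over `Dset`: tuples obtained via a homomorphism from the body into `Dset`. -/
def ansQ {T : Type} (q : Query T) (Dset : DB) : Set (List Const) :=
  {t | ∃ h : T → Const,
    (∀ a ∈ q.body, (⟨a.rel, a.args.map h⟩ : Atom) ∈ Dset) ∧ q.headArgs.map h = t}

/-- Answers containing only non-fresh constants. -/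
def ansNF {T : Type} (q : Query T) (C : DB) : Set (List Const) :=
  {t | t ∈ ansQ q C ∧ ∀ c ∈ t, nonFresh c}

/-- Certain answers of `q` w.r.t. database `D` and constraints given by `sat`. -/
def certQ {T : Type} (q : Query T) (sat : DB → Prop) (D : DB) : Set (List Const) :=
  {t | (∀ c ∈ t, nonFresh c) ∧ ∀ B : DB, D ⊆ B → sat B → t ∈ ansQ q B}

theorem map_eq_self_of_homFix {μ : Const → Const} (hμ : homFix μ) {t : List Const}
    (ht : ∀ c ∈ t, nonFresh c) : t.map μ = t := by
  refine (List.map_congr_left fun c hc => ?_).trans (List.map_id' t)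
  obtain ⟨n, rfl⟩ := ht c hc
  exact hμ n

theorem map_mem_ansQ_of_isHom {T : Type} {q : Query T} {μ : Const → Const} {C B : DB}
    (hμ : isHom μ C B) {t : List Const} (ht : t ∈ ansQ q C) : t.map μ ∈ ansQ q B := by
  obtain ⟨h, hbody, rfl⟩ := ht
  refine ⟨μ ∘ h, fun a ha => ?_, (List.map_map ..).symm⟩
  simpa [mapAtom, List.map_map] using hμ _ (hbody a ha)

theorem ansNF_subset_certQ {T : Type} {sat : DB → Prop} {D C : DB}
    (hhom : ∀ B : DB, D ⊆ B → sat B → ∃ μ : Const → Const, homFix μ ∧ isHom μ C B)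
    (q : Query T) : ansNF q C ⊆ certQ q sat D := by
  rintro t ⟨htC, hnf⟩
  refine ⟨hnf, fun B hDB hB => ?_⟩
  obtain ⟨μ, hfix, hμ⟩ := hhom B hDB hB
  simpa only [map_eq_self_of_homFix hfix hnf] using map_mem_ansQ_of_isHom hμ htC

theorem certQ_subset_ansNF {T : Type} {sat : DB → Prop} {D C : DB} (hsat : sat C)
    (hsub : D ⊆ C) (q : Query T) : certQ q sat D ⊆ ansNF q C :=
  fun _ ⟨hnf, hcert⟩ => ⟨hcert C hsub hsat, hnf⟩

theorem nonfresh_answers_over_universal_model_eq_certain_answers_general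
    {T : Type} (sat : DB → Prop) (D C : DB)
    (hsat : sat C) (hsub : D ⊆ C)
    (hhom : ∀ B : DB, D ⊆ B → sat B →
      ∃ μ : Const → Const, homFix μ ∧ (∀ c, occursC c D → μ c = c) ∧ isHom μ C B)
    (q : Query T) :
    ansNF q C = certQ q sat D := by
  refine (ansNF_subset_certQ (fun B hDB hB => ?_) q).antisymm (certQ_subset_ansNF hsat hsub q)
  obtain ⟨μ, hfix, -, hμ⟩ := hhom B hDB hB
  exact ⟨μ, hfix, hμ⟩

/-- if `C` satisfies the dependencies, contains `D`, and admits a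
homomorphism (fixing non-fresh constants and the identity on constants of `D`)
into every model `B ⊇ D` with `B ⊨ Σ`, then the non-fresh answers over `C`
are exactly the certain answers w.r.t. `D` and `Σ`. -/
theorem nonfresh_answers_over_universal_model_eq_certain_answers
    {T : Type} (sat : DB → Prop) (D C : DB)
    (hfin : D.Finite) (hsat : sat C) (hsub : D ⊆ C)
    (hhom : ∀ B : DB, D ⊆ B → sat B →
      ∃ μ : Const → Const, homFix μ ∧ (∀ c, occursC c D → μ c = c) ∧ isHom μ C B)
    (q : Query T) :
    ansNF q C = certQ q sat D :=
  nonfresh_answers_over_universal_model_eq_certain_answers_general sat D C hsat hsub hhom q
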